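/- arXiv:1910.05954 — 2 statements merged into one kernel-verified Lean document; each statement's English description precedes it below -/
import Mathlib

section
/- Let ρ be the uniform probability measure on the closed unit disc X ⊂ ℝ². For θ ∈ ℝ, set x_θ = (cos θ, sin θ), μ_θ = ½(δ_{x_θ} + δ_{−x_θ}), and define T_θ : X → ℝ² by T_θ(x) = x_θ if ⟨x, x_θ⟩ ≥ 0 and T_θ(x) = −x_θ otherwise. Then: (a) (T_θ)_#ρ = μ_θ and T_θ is ρ-a.e. the gradient of the convex function x ↦ |⟨x, x_θ⟩|, so T_θ is the Monge map from ρ to μ_θ; (b) W₂(μ₀, μ_θ) ≤ |θ|; (c) for every θ ∈ (0, π/2], ‖T_θ − T₀‖²_{L²(ρ)} ≥ θ/π; consequently ‖T_θ − T₀‖_{L²(ρ)} ≥ π^{−1/2} W₂(μ₀, μ_θ)^{1/2}. In particular the Monge embedding μ ↦ T_μ is in general not better than ½-Hölder with respect to W₂. -/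
open MeasureTheory
open scoped RealInnerProductSpace ENNReal

/-- The 2-Wasserstein distance, as the square root of the infimum of the quadratic transport
cost over couplings. -/
noncomputable def W2 (μ ν : Measure (EuclideanSpace ℝ (Fin 2))) : ℝ :=
  Real.sqrt (sInf {c : ℝ |
    ∃ γ : Measure (EuclideanSpace ℝ (Fin 2) × EuclideanSpace ℝ (Fin 2)),
      γ.map Prod.fst = μ ∧ γ.map Prod.snd = ν ∧ c = ∫ p, ‖p.1 - p.2‖ ^ 2 ∂γ})

/-- The point `x_θ = (cos θ, sin θ)` on the unit circle. -/
noncomputable def xpt (θ : ℝ) : EuclideanSpace ℝ (Fin 2) :=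
  (EuclideanSpace.equiv (Fin 2) ℝ).symm ![Real.cos θ, Real.sin θ]

/-- The uniform probability measure on the closed unit disc. -/
noncomputable def discUnif : Measure (EuclideanSpace ℝ (Fin 2)) :=
  (volume (Metric.closedBall (0 : EuclideanSpace ℝ (Fin 2)) 1))⁻¹ •
    volume.restrict (Metric.closedBall (0 : EuclideanSpace ℝ (Fin 2)) 1)

/-- The measure `μ_θ = ½ (δ_{x_θ} + δ_{−x_θ})`. -/
noncomputable def μθ (θ : ℝ) : Measure (EuclideanSpace ℝ (Fin 2)) :=
  (2 : ℝ≥0∞)⁻¹ • (Measure.dirac (xpt θ) + Measure.dirac (-xpt θ))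

/-- The map `T_θ` sending `x` to `x_θ` when `⟨x, x_θ⟩ ≥ 0` and to `−x_θ` otherwise. -/
noncomputable def Tθ (θ : ℝ) (x : EuclideanSpace ℝ (Fin 2)) : EuclideanSpace ℝ (Fin 2) :=
  if 0 ≤ ⟪x, xpt θ⟫ then xpt θ else -xpt θ

/-!
`T_θ x` is `x_θ` times the sign of `⟨x, x_θ⟩`. Since `ρ` is invariant under `x ↦ -x` and charges
no line, each half-disc `{±⟨x, x_θ⟩ ≥ 0}` has mass `½`, which gives `(T_θ)_# ρ = μ_θ`; off the
null line `⟨x, x_θ⟩ = 0`, `T_θ` is the gradient of `|⟨x, x_θ⟩|`. Sending `±x_0` to `±x_θ` is a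
coupling of cost `‖x_0 - x_θ‖² ≤ θ²`. On the two opposite wedges between the lines
`⟨x, x_0⟩ = 0` and `⟨x, x_θ⟩ = 0`, the maps `T_θ` and `T_0` disagree and
`‖T_θ - T_0‖² = 2 + 2 cos θ ≥ 2`. Each wedge contains a triangle of area `sin θ / 2`, so
`‖T_θ - T_0‖²_{L²(ρ)} ≥ 2 sin θ / π ≥ θ / π` by Jordan's inequality `sin θ ≥ 2θ / π`.
-/

open Real Set Metric

section InnerProductSpace

variable {E : Type*} [NormedAddCommGroup E] [InnerProductSpace ℝ E]

theorem convexOn_abs_inner (v : E) : ConvexOn ℝ univ fun z : E => |⟪z, v⟫| := by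
  simpa [Function.comp_def, real_inner_comm] using
    convexOn_univ_norm.comp_linearMap (innerSL ℝ v : E →ₗ[ℝ] ℝ)

theorem hasGradientAt_abs_inner [CompleteSpace E] {v x : E} (hx : ⟪x, v⟫ ≠ 0) :
    HasGradientAt (fun z => |⟪z, v⟫|) (if 0 ≤ ⟪x, v⟫ then v else -v) x := by
  have hinner : HasFDerivAt (fun z => ⟪z, v⟫) (InnerProductSpace.toDual ℝ E v) x := by
    have hfun : (fun z => ⟪z, v⟫) = InnerProductSpace.toDual ℝ E v := by
      ext z; simp [real_inner_comm]
    exact hfun ▸ (InnerProductSpace.toDual ℝ E v).hasFDerivAt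
  rw [hasGradientAt_iff_hasFDerivAt]
  rcases hx.lt_or_gt with hneg | hpos
  · simpa [not_le.mpr hneg] using hinner.abs_of_neg hneg
  · simpa [hpos.le] using hinner.abs_of_pos hpos

variable [MeasurableSpace E] [BorelSpace E]

theorem measure_inner_eq_zero [FiniteDimensional ℝ E] (μ : Measure E) [μ.IsAddHaarMeasure]
    {v : E} (hv : v ≠ 0) : μ {x | ⟪x, v⟫ = 0} = 0 := by
  have hker : {x | ⟪x, v⟫ = 0} = ((ℝ ∙ v)ᗮ : Set E) := by
    ext x
    simp [Submodule.mem_orthogonal_singleton_iff_inner_right, real_inner_comm]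
  rw [hker]
  refine Measure.addHaar_submodule μ _ fun htop => hv ?_
  have : v ∈ (ℝ ∙ v)ᗮ := htop ▸ Submodule.mem_top
  simpa using Submodule.mem_orthogonal_singleton_iff_inner_right.mp this

theorem measure_compl_inner_nonneg (μ : Measure E) [μ.IsNegInvariant] {v : E}
    (hv : μ {x | ⟪x, v⟫ = 0} = 0) :
    μ {x | 0 ≤ ⟪x, v⟫}ᶜ = μ {x | 0 ≤ ⟪x, v⟫} := by
  have hneg : -{x | 0 ≤ ⟪x, v⟫} = {x : E | ⟪x, v⟫ ≤ 0} := by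
    ext x; simp [inner_neg_left]
  conv_rhs => rw [← Measure.measure_neg, hneg]
  refine measure_congr (ae_eq_set.mpr ⟨?_, ?_⟩)
  all_goals exact measure_mono_null (fun x hx => by simp at hx ⊢; linarith) hv

end InnerProductSpace

theorem MeasureTheory.Measure.map_piecewise_const {α β : Type*} [MeasurableSpace α]
    [MeasurableSpace β] (μ : Measure α) {s : Set α} [DecidablePred (· ∈ s)]
    (hs : MeasurableSet s) (a b : β) :
    μ.map (s.piecewise (fun _ => a) fun _ => b) = μ s • dirac a + μ sᶜ • dirac b := by
  have hconst {t : Set α} {c : β} (ht : MeasurableSet t)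
      (htc : EqOn (s.piecewise (fun _ => a) fun _ => b) (fun _ => c) t) :
      (μ.restrict t).map (s.piecewise (fun _ => a) fun _ => b) = μ t • dirac c := by
    rw [map_congr ((ae_restrict_mem ht).mono htc), map_const, restrict_apply_univ]
  conv_lhs => rw [← restrict_add_restrict_compl (μ := μ) hs]
  rw [Measure.map_add _ _ (measurable_const.piecewise hs measurable_const),
    hconst hs fun x hx => piecewise_eq_of_mem _ _ _ hx,
    hconst hs.compl fun x hx => piecewise_eq_of_notMem _ _ _ hx]

local notation "ℝ²" => EuclideanSpace ℝ (Fin 2)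

theorem volume_closedBall_zero_one : volume (closedBall (0 : ℝ²) 1) = ENNReal.ofReal π := by
  simp [EuclideanSpace.volume_closedBall, Real.sq_sqrt pi_pos.le, one_add_one_eq_two]

theorem discUnif_apply (A : Set ℝ²) :
    discUnif A = (ENNReal.ofReal π)⁻¹ * volume (A ∩ closedBall 0 1) := by
  rw [discUnif, Measure.smul_apply, Measure.restrict_apply' measurableSet_closedBall,
    volume_closedBall_zero_one, smul_eq_mul]

instance : IsProbabilityMeasure discUnif :=
  ⟨by rw [discUnif_apply, univ_inter, volume_closedBall_zero_one,
    ENNReal.inv_mul_cancel (by simp [pi_pos]) ENNReal.ofReal_ne_top]⟩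

instance : discUnif.IsNegInvariant := by
  refine ⟨Measure.ext fun A _ => ?_⟩
  have hball : -closedBall (0 : ℝ²) 1 = closedBall 0 1 := by simp
  rw [Measure.neg_apply, discUnif_apply, discUnif_apply, ← hball, ← Set.inter_neg, hball,
    Measure.measure_neg]

theorem discUnif_absolutelyContinuous : discUnif ≪ volume :=
  Measure.smul_absolutelyContinuous.trans Measure.restrict_le_self.absolutelyContinuous

theorem inner_xpt (x : ℝ²) (θ : ℝ) : ⟪x, xpt θ⟫ = x 0 * cos θ + x 1 * sin θ := by
  simp [PiLp.inner_apply, Fin.sum_univ_two, xpt, mul_comm]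

theorem inner_xpt_xpt (a b : ℝ) : ⟪xpt a, xpt b⟫ = cos (a - b) := by
  rw [inner_xpt, cos_sub]
  simp [xpt]

theorem norm_xpt (θ : ℝ) : ‖xpt θ‖ = 1 := by
  simp [EuclideanSpace.norm_eq, Fin.sum_univ_two, xpt]

theorem Tθ_of_inner_pos {θ : ℝ} {x : ℝ²} (h : 0 < ⟪x, xpt θ⟫) : Tθ θ x = xpt θ :=
  if_pos h.le

theorem Tθ_of_inner_neg {θ : ℝ} {x : ℝ²} (h : ⟪x, xpt θ⟫ < 0) : Tθ θ x = -xpt θ :=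
  if_neg h.not_ge

@[fun_prop]
theorem measurable_Tθ (θ : ℝ) : Measurable (Tθ θ) :=
  Measurable.ite (measurableSet_le measurable_const (by fun_prop)) measurable_const
    measurable_const

theorem norm_Tθ (θ : ℝ) (x : ℝ²) : ‖Tθ θ x‖ = 1 := by
  unfold Tθ; split_ifs <;> simp [norm_xpt]

theorem discUnif_inner_xpt_eq_zero (θ : ℝ) : discUnif {x | ⟪x, xpt θ⟫ = 0} = 0 :=
  discUnif_absolutelyContinuous <|
    measure_inner_eq_zero volume (norm_ne_zero_iff.mp ((norm_xpt θ).trans_ne one_ne_zero))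

theorem map_Tθ_discUnif (θ : ℝ) : discUnif.map (Tθ θ) = μθ θ := by
  have hs : MeasurableSet {x : ℝ² | 0 ≤ ⟪x, xpt θ⟫} :=
    measurableSet_le measurable_const (by fun_prop)
  have hcompl := measure_compl_inner_nonneg discUnif (discUnif_inner_xpt_eq_zero θ)
  have hhalf : discUnif {x : ℝ² | 0 ≤ ⟪x, xpt θ⟫} = 2⁻¹ := by
    refine ENNReal.eq_inv_of_mul_eq_one_left ?_
    rw [mul_two, ← measure_univ (μ := discUnif), ← measure_add_measure_compl hs, hcompl]
  have hT : Tθ θ = {x : ℝ² | 0 ≤ ⟪x, xpt θ⟫}.piecewise (fun _ => xpt θ) fun _ => -xpt θ := by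
    ext1 x; simp [Tθ, Set.piecewise]
  rw [hT, Measure.map_piecewise_const _ hs, hcompl, hhalf, μθ, smul_add]

theorem ae_hasGradientAt_abs_inner_xpt (θ : ℝ) :
    ∀ᵐ x ∂discUnif, HasGradientAt (fun z : ℝ² => |⟪z, xpt θ⟫|) (Tθ θ x) x := by
  filter_upwards [measure_eq_zero_iff_ae_notMem.mp (discUnif_inner_xpt_eq_zero θ)] with x hx
  exact hasGradientAt_abs_inner hx

theorem W2_le_sqrt_integral {μ ν : Measure ℝ²} (γ : Measure (ℝ² × ℝ²))
    (hγ₁ : γ.map Prod.fst = μ) (hγ₂ : γ.map Prod.snd = ν) :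
    W2 μ ν ≤ √(∫ p, ‖p.1 - p.2‖ ^ 2 ∂γ) := by
  refine Real.sqrt_le_sqrt (csInf_le ⟨0, ?_⟩ ⟨γ, hγ₁, hγ₂, rfl⟩)
  rintro _ ⟨γ', -, -, rfl⟩
  exact integral_nonneg fun p => by positivity

theorem W2_symmetric_pairs_le (a b : ℝ²) :
    W2 ((2 : ℝ≥0∞)⁻¹ • (Measure.dirac a + Measure.dirac (-a)))
      ((2 : ℝ≥0∞)⁻¹ • (Measure.dirac b + Measure.dirac (-b))) ≤ ‖a - b‖ := by
  have hcost (p : ℝ² × ℝ²) :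
      Integrable (fun q : ℝ² × ℝ² => ‖q.1 - q.2‖ ^ 2) (Measure.dirac p) :=
    integrable_dirac enorm_lt_top
  let γ : Measure (ℝ² × ℝ²) := (2 : ℝ≥0∞)⁻¹ • (Measure.dirac (a, b) + Measure.dirac (-a, -b))
  have hγ₁ : γ.map Prod.fst = (2 : ℝ≥0∞)⁻¹ • (Measure.dirac a + Measure.dirac (-a)) := by
    simp [γ, Measure.map_smul, Measure.map_add _ _ measurable_fst,
      Measure.map_dirac' measurable_fst]
  have hγ₂ : γ.map Prod.snd = (2 : ℝ≥0∞)⁻¹ • (Measure.dirac b + Measure.dirac (-b)) := by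
    simp [γ, Measure.map_smul, Measure.map_add _ _ measurable_snd,
      Measure.map_dirac' measurable_snd]
  refine (W2_le_sqrt_integral γ hγ₁ hγ₂).trans_eq ?_
  rw [integral_smul_measure, integral_add_measure (hcost _) (hcost _), integral_dirac,
    integral_dirac, neg_sub_neg, ← neg_sub a b, norm_neg]
  simp [← two_mul]

theorem norm_xpt_sub_xpt_le (a b : ℝ) : ‖xpt a - xpt b‖ ≤ |a - b| := by
  rw [← Real.sqrt_sq (norm_nonneg _), ← Real.sqrt_sq_eq_abs]
  refine Real.sqrt_le_sqrt ?_
  rw [norm_sub_sq_real, inner_xpt_xpt, norm_xpt, norm_xpt]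
  nlinarith [one_sub_sq_div_two_le_cos (x := a - b)]

theorem W2_μθ_zero_le (θ : ℝ) : W2 (μθ 0) (μθ θ) ≤ |θ| :=
  (W2_symmetric_pairs_le (xpt 0) (xpt θ)).trans ((norm_xpt_sub_xpt_le 0 θ).trans_eq (by simp))

def wedge (θ : ℝ) : Set ℝ² := {x | 0 < ⟪x, xpt 0⟫ ∧ ⟪x, xpt θ⟫ < 0}

theorem measurableSet_wedge (θ : ℝ) : MeasurableSet (wedge θ) :=
  show MeasurableSet ({x : ℝ² | 0 < ⟪x, xpt 0⟫} ∩ {x | ⟪x, xpt θ⟫ < 0}) from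
    (measurableSet_lt measurable_const (by fun_prop)).inter
      (measurableSet_lt (by fun_prop) measurable_const)

/-- The triangle with vertices `0`, `(0, -1)` and `(sin θ, -cos θ)`. -/
def triangle (θ : ℝ) : Set ℝ² :=
  {x | x 0 ∈ Ioo 0 (sin θ) ∧
    x 1 ∈ Ioo (-1 + x 0 * (1 - cos θ) / sin θ) (-(x 0 * cos θ) / sin θ)}

section Triangle

variable {θ : ℝ}

theorem volume_triangle (hs : 0 < sin θ) : volume (triangle θ) = ENNReal.ofReal (sin θ / 2) := by
  let e : ℝ² ≃ᵐ ℝ × ℝ :=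
    (MeasurableEquiv.toLp 2 (Fin 2 → ℝ)).symm.trans MeasurableEquiv.finTwoArrow
  have he : MeasurePreserving e volume (volume.prod volume) :=
    (volume_preserving_finTwoArrow ℝ).comp
      (EuclideanSpace.volume_preserving_symm_measurableEquiv_toLp (Fin 2))
  have htri : triangle θ = e ⁻¹' regionBetween (fun t => -1 + t * (1 - cos θ) / sin θ)
      (fun t => -(t * cos θ) / sin θ) (Ioo 0 (sin θ)) := rfl
  rw [htri, he.measure_preimage (measurableSet_regionBetween (by fun_prop) (by fun_prop)
    measurableSet_Ioo).nullMeasurableSet, volume_regionBetween_eq_integral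
    ((Continuous.integrableOn_Icc (by fun_prop)).mono_set Ioo_subset_Icc_self)
    ((Continuous.integrableOn_Icc (by fun_prop)).mono_set Ioo_subset_Icc_self) measurableSet_Ioo]
  · have hwidth (t : ℝ) :
        ((fun t => -(t * cos θ) / sin θ) - fun t => -1 + t * (1 - cos θ) / sin θ) t
          = 1 - t / sin θ := by
      simp only [Pi.sub_apply]; field_simp; ring
    simp_rw [hwidth]
    rw [← integral_Ioc_eq_integral_Ioo, ← intervalIntegral.integral_of_le hs.le,
      intervalIntegral.integral_sub intervalIntegrable_const
        (intervalIntegral.intervalIntegrable_id.div_const _),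
      intervalIntegral.integral_div, integral_id, intervalIntegral.integral_const]
    congr 1
    field_simp
    ring
  · intro t ht
    rw [← mul_le_mul_iff_left₀ hs, add_mul, div_mul_cancel₀ _ hs.ne', div_mul_cancel₀ _ hs.ne']
    nlinarith [ht.1, ht.2]

theorem triangle_subset_wedge_inter_closedBall (hs : 0 < sin θ) (hc : 0 ≤ cos θ) :
    triangle θ ⊆ wedge θ ∩ closedBall 0 1 := by
  rintro x ⟨⟨hx0, hxs⟩, hl, hu⟩
  rw [lt_div_iff₀ hs] at hu
  rw [add_div' _ _ _ hs.ne', div_lt_iff₀ hs] at hl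
  refine ⟨⟨by simpa [inner_xpt] using hx0, by rw [inner_xpt]; linarith⟩, ?_⟩
  rw [mem_closedBall_zero_iff, EuclideanSpace.norm_eq, Real.sqrt_le_one, Fin.sum_univ_two]
  simp only [Real.norm_eq_abs, sq_abs]
  have hpyth := sin_sq_add_cos_sq θ
  have hgap : 0 < sin θ - x 0 * (1 - cos θ) := by nlinarith [cos_le_one θ]
  have hx1 : (x 1 * sin θ) ^ 2 ≤ (sin θ - x 0 * (1 - cos θ)) ^ 2 := by
    nlinarith [mul_nonneg hx0.le hc]
  -- `x₀² sin² θ + (sin θ - x₀ (1 - cos θ))² - sin² θ = -2 x₀ (1 - cos θ) (sin θ - x₀)`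
  have hkey : (x 0 ^ 2 + x 1 ^ 2) * sin θ ^ 2 ≤ 1 * sin θ ^ 2 := by
    nlinarith [mul_nonneg (mul_nonneg hx0.le (sub_nonneg.mpr (cos_le_one θ)))
      (sub_nonneg.mpr hxs.le)]
  exact le_of_mul_le_mul_right hkey (by positivity)

theorem discUnif_real_wedge_ge (hs : 0 < sin θ) (hc : 0 ≤ cos θ) :
    sin θ / (2 * π) ≤ discUnif.real (wedge θ) := by
  have hsub := triangle_subset_wedge_inter_closedBall hs hc
  calc sin θ / (2 * π) = discUnif.real (triangle θ) := by
        rw [measureReal_def, discUnif_apply, inter_eq_self_of_subset_left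
          (hsub.trans inter_subset_right), volume_triangle hs, ENNReal.toReal_mul,
          ENNReal.toReal_inv, ENNReal.toReal_ofReal pi_pos.le,
          ENNReal.toReal_ofReal (by positivity)]
        field_simp
    _ ≤ discUnif.real (wedge θ) := measureReal_mono (hsub.trans inter_subset_left)

end Triangle

theorem norm_Tθ_sub_Tθ_zero_of_mem_wedge {θ : ℝ} {x : ℝ²} (hx : x ∈ wedge θ ∪ -wedge θ) :
    ‖Tθ θ x - Tθ 0 x‖ = ‖xpt θ + xpt 0‖ := by
  rcases hx with ⟨h0, hθ⟩ | ⟨h0, hθ⟩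
  · rw [Tθ_of_inner_pos h0, Tθ_of_inner_neg hθ, ← norm_neg]
    congr 1; abel
  · rw [inner_neg_left, neg_pos] at h0
    rw [inner_neg_left, neg_lt_zero] at hθ
    rw [Tθ_of_inner_neg h0, Tθ_of_inner_pos hθ, sub_neg_eq_add]

theorem norm_xpt_add_xpt_sq (a b : ℝ) : ‖xpt a + xpt b‖ ^ 2 = 2 + 2 * cos (a - b) := by
  rw [norm_add_sq_real, inner_xpt_xpt, norm_xpt, norm_xpt]
  ring

theorem integrable_norm_Tθ_sub_Tθ_sq (θ θ' : ℝ) :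
    Integrable (fun x => ‖Tθ θ x - Tθ θ' x‖ ^ 2) discUnif := by
  refine Integrable.of_bound (by fun_prop) 4 (ae_of_all _ fun x => ?_)
  have := norm_sub_le (Tθ θ x) (Tθ θ' x)
  rw [norm_Tθ, norm_Tθ] at this
  rw [Real.norm_eq_abs, abs_of_nonneg (by positivity)]
  nlinarith [norm_nonneg (Tθ θ x - Tθ θ' x)]

theorem integral_norm_Tθ_sub_Tθ_zero_sq_ge {θ : ℝ} (hθ₀ : 0 < θ) (hθ : θ ≤ π / 2) :
    θ / π ≤ ∫ x, ‖Tθ θ x - Tθ 0 x‖ ^ 2 ∂discUnif := by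
  have hs : 0 < sin θ := sin_pos_of_pos_of_lt_pi hθ₀ (by linarith [pi_pos])
  have hc : 0 ≤ cos θ := cos_nonneg_of_mem_Icc ⟨by linarith [pi_pos], hθ⟩
  have hW := measurableSet_wedge θ
  have hdisj : Disjoint (wedge θ) (-wedge θ) := by
    refine disjoint_left.mpr fun x hx hx' => ?_
    have := hx'.1
    rw [inner_neg_left] at this
    linarith [hx.1]
  have hunion : discUnif.real (wedge θ ∪ -wedge θ) = 2 * discUnif.real (wedge θ) := by
    rw [measureReal_union hdisj hW.neg, measureReal_def, measureReal_def, Measure.measure_neg]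
    ring
  have hlb : ∀ x ∈ wedge θ ∪ -wedge θ, 2 ≤ ‖Tθ θ x - Tθ 0 x‖ ^ 2 := fun x hx => by
    rw [norm_Tθ_sub_Tθ_zero_of_mem_wedge hx, norm_xpt_add_xpt_sq, sub_zero]
    linarith
  have hjordan : θ ≤ 2 * sin θ := by
    have := mul_le_sin hθ₀.le hθ
    rw [div_mul_eq_mul_div, div_le_iff₀ pi_pos] at this
    nlinarith [pi_le_four]
  have hint := integrable_norm_Tθ_sub_Tθ_sq θ 0
  calc θ / π ≤ 2 * (2 * (sin θ / (2 * π))) := by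
        rw [div_le_iff₀ pi_pos]; field_simp; linarith
    _ ≤ 2 * discUnif.real (wedge θ ∪ -wedge θ) := by
        rw [hunion]; gcongr; exact discUnif_real_wedge_ge hs hc
    _ ≤ ∫ x in wedge θ ∪ -wedge θ, ‖Tθ θ x - Tθ 0 x‖ ^ 2 ∂discUnif :=
        setIntegral_ge_of_const_le_real (hW.union hW.neg) (measure_ne_top _ _) hlb
          hint.integrableOn
    _ ≤ ∫ x, ‖Tθ θ x - Tθ 0 x‖ ^ 2 ∂discUnif :=
        setIntegral_le_integral hint (ae_of_all _ fun x => by positivity)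

/-- The Monge embedding is in general not better than ½-Hölder with respect to `W₂`:
(a) `T_θ` pushes the uniform measure `ρ` on the unit disc forward to `μ_θ` and is `ρ`-a.e. the
gradient of the convex function `x ↦ |⟨x, x_θ⟩|` (hence is the Monge map from `ρ` to `μ_θ`);
(b) `W₂(μ₀, μ_θ) ≤ |θ|`;
(c) for `θ ∈ (0, π/2]`, `‖T_θ − T₀‖²_{L²(ρ)} ≥ θ/π`, and consequently
`‖T_θ − T₀‖_{L²(ρ)} ≥ π^{-1/2} W₂(μ₀, μ_θ)^{1/2}`. -/
theorem monge_embedding_not_better_than_half_holder :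
    (∀ θ : ℝ, Measure.map (Tθ θ) discUnif = μθ θ) ∧
    (∀ θ : ℝ, ConvexOn ℝ Set.univ (fun z : EuclideanSpace ℝ (Fin 2) => |⟪z, xpt θ⟫|) ∧
      ∀ᵐ x ∂discUnif, HasGradientAt (fun z : EuclideanSpace ℝ (Fin 2) => |⟪z, xpt θ⟫|)
        (Tθ θ x) x) ∧
    (∀ θ : ℝ, W2 (μθ 0) (μθ θ) ≤ |θ|) ∧
    (∀ θ : ℝ, θ ∈ Set.Ioc 0 (Real.pi / 2) →
      (θ / Real.pi ≤ ∫ x, ‖Tθ θ x - Tθ 0 x‖ ^ 2 ∂discUnif) ∧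
      Real.pi ^ (-(1 : ℝ) / 2) * Real.sqrt (W2 (μθ 0) (μθ θ)) ≤
        Real.sqrt (∫ x, ‖Tθ θ x - Tθ 0 x‖ ^ 2 ∂discUnif)) := by
  refine ⟨map_Tθ_discUnif, fun θ => ⟨convexOn_abs_inner _, ae_hasGradientAt_abs_inner_xpt θ⟩,
    W2_μθ_zero_le, fun θ ⟨hθ₀, hθ⟩ => ?_⟩
  have hL2 := integral_norm_Tθ_sub_Tθ_zero_sq_ge hθ₀ hθ
  refine ⟨hL2, ?_⟩
  have hW : W2 (μθ 0) (μθ θ) ≤ θ := (W2_μθ_zero_le θ).trans_eq (abs_of_pos hθ₀)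
  calc π ^ (-(1 : ℝ) / 2) * √(W2 (μθ 0) (μθ θ)) = √(W2 (μθ 0) (μθ θ)) / √π := by
        rw [neg_div, rpow_neg pi_pos.le, ← Real.sqrt_eq_rpow, inv_mul_eq_div]
    _ ≤ √θ / √π := by gcongr
    _ = √(θ / π) := (Real.sqrt_div' θ pi_pos.le).symm
    _ ≤ √(∫ x, ‖Tθ θ x - Tθ 0 x‖ ^ 2 ∂discUnif) := Real.sqrt_le_sqrt hL2
end

section
/- Let X, Y be compact convex subsets of ℝ^d and let ρ be a probability measure on X with density whose support equals X. Let μ₁, …, μ_S be Borel probability measures on Y and let λ₁, …, λ_S ≥ 0 with Σ_s λ_s = 1. Define T̄ := Σ_s λ_s T_{μ_s} ∈ L²(ρ, ℝ^d) and μ̄ := T̄_#ρ. Then T̄ is the Monge map from ρ to μ̄ (i.e. T_{μ̄} = T̄ ρ-a.e.), and μ̄ minimizes ν ↦ Σ_s λ_s ‖T_ν − T_{μ_s}‖²_{L²(ρ)} over all Borel probability measures ν on ℝ^d; that is, Σ_s λ_s ‖T_{μ̄} − T_{μ_s}‖²_{L²(ρ)} ≤ Σ_s λ_s ‖T_ν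 − T_{μ_s}‖²_{L²(ρ)} for every such ν. -/
open MeasureTheory
open scoped RealInnerProductSpace ENNReal


open MeasureTheory Set
open scoped RealInnerProductSpace ENNReal

variable {E : Type*} [NormedAddCommGroup E] [InnerProductSpace ℝ E]

lemma aux_le_deriv {F : ℝ → ℝ} {c a : ℝ} (h : HasDerivAt F c 0)
    (h2 : ∀ᶠ t in nhdsWithin (0:ℝ) (Set.Ioi 0), a * t ≤ F t - F 0) : a ≤ c := by
  have ht : Filter.Tendsto (slope F 0) (nhdsWithin 0 (Set.Ioi 0)) (nhds c) :=
    (hasDerivAt_iff_tendsto_slope.1 h).mono_left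
      (nhdsWithin_mono _ (fun t ht => ne_of_gt ht))
  refine ge_of_tendsto ht ?_
  filter_upwards [h2, self_mem_nhdsWithin] with t h2t ht
  rw [slope_def_field]
  rw [le_div_iff₀ (by simpa using ht)]
  simpa using h2t

lemma aux_deriv_le {F : ℝ → ℝ} {c a : ℝ} (h : HasDerivAt F c 0)
    (h2 : ∀ᶠ t in nhdsWithin (0:ℝ) (Set.Ioi 0), F t - F 0 ≤ a * t) : c ≤ a := by
  have ht : Filter.Tendsto (slope F 0) (nhdsWithin 0 (Set.Ioi 0)) (nhds c) :=
    (hasDerivAt_iff_tendsto_slope.1 h).mono_left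
      (nhdsWithin_mono _ (fun t ht => ne_of_gt ht))
  refine le_of_tendsto ht ?_
  filter_upwards [h2, self_mem_nhdsWithin] with t h2t ht
  rw [slope_def_field]
  rw [div_le_iff₀ (by simpa using ht)]
  simpa using h2t

lemma aux_line_deriv [CompleteSpace E] {f : E → ℝ} {g x : E} (h : HasGradientAt f g x) (v : E) :
    HasDerivAt (fun t : ℝ => f (x + t • v)) ⟪g, v⟫ 0 := by
  have hline : HasDerivAt (fun t : ℝ => x + t • v) v 0 := by
    simpa using ((hasDerivAt_id (0:ℝ)).smul_const v).const_add x
  have hf := h.hasFDerivAt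
  have hf' : HasFDerivAt f (InnerProductSpace.toDual ℝ E g : E →L[ℝ] ℝ) (x + (0:ℝ) • v) := by
    simpa using hf
  have := hf'.comp_hasDerivAt 0 hline
  exact (by simpa using this : HasDerivAt (f ∘ fun t : ℝ => x + t • v) ⟪g, v⟫ 0)

lemma aux_subgrad [CompleteSpace E] {f : E → ℝ} (hf : ConvexOn ℝ Set.univ f) {g x : E}
    (h : HasGradientAt f g x) (z : E) : f x + ⟪g, z - x⟫ ≤ f z := by
  have hd := aux_line_deriv h (z - x)
  have key : ⟪g, z - x⟫ ≤ f z - f x := by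
    apply aux_deriv_le hd
    filter_upwards [Ioo_mem_nhdsGT_of_mem (Set.left_mem_Ico.2 zero_lt_one)] with t ht
    have hconv := hf.2 (Set.mem_univ x) (Set.mem_univ z)
      (by linarith [ht.2] : (0:ℝ) ≤ 1 - t) (le_of_lt ht.1) (by ring)
    simp only [smul_eq_mul] at hconv
    have hpt : x + t • (z - x) = (1 - t) • x + t • z := by module
    rw [hpt]
    simp only [zero_smul, add_zero]
    calc f ((1-t) • x + t • z) - f x ≤ ((1-t) * f x + t * f z) - f x := by linarith
      _ = (f z - f x) * t := by ring
  linarith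
variable {d : ℕ}

lemma aux_aemeasurable {α β : Type*} [MeasurableSpace α] [MeasurableSpace β]
    {ρ : Measure α} {f : α → β} {ν : Measure β} [IsProbabilityMeasure ν]
    (h : Measure.map f ρ = ν) : AEMeasurable f ρ := by
  by_contra hc
  rw [Measure.map_of_not_aemeasurable hc] at h
  have := measure_univ (μ := ν)
  rw [← h] at this
  simp at this

lemma aux_ae_mem {α β : Type*} [MeasurableSpace α] [MeasurableSpace β]
    {ρ : Measure α} {f : α → β} {ν : Measure β} (hf : AEMeasurable f ρ)
    (h : Measure.map f ρ = ν) {s : Set β} (hs : MeasurableSet s) (hν : ν sᶜ = 0) :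
    ∀ᵐ x ∂ρ, f x ∈ s := by
  have h0 : ρ (f ⁻¹' sᶜ) = 0 := by
    rw [← Measure.map_apply_of_aemeasurable hf hs.compl, h]; exact hν
  refine (ae_iff).2 ?_
  exact h0

lemma aux_int_sq {f g : EuclideanSpace ℝ (Fin d) → EuclideanSpace ℝ (Fin d)}
    {ρ : Measure (EuclideanSpace ℝ (Fin d))} [IsFiniteMeasure ρ] {Cf Cg : ℝ}
    (hf : AEMeasurable f ρ) (hg : AEMeasurable g ρ)
    (hfb : ∀ᵐ x ∂ρ, ‖f x‖ ≤ Cf) (hgb : ∀ᵐ x ∂ρ, ‖g x‖ ≤ Cg) :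
    Integrable (fun x => ‖f x - g x‖ ^ 2) ρ := by
  refine ⟨((hf.sub hg).norm.pow_const 2).aestronglyMeasurable,
    HasFiniteIntegral.of_bounded (C := (Cf + Cg) ^ 2) ?_⟩
  filter_upwards [hfb, hgb] with x h1 h2
  have h3 : ‖f x - g x‖ ≤ Cf + Cg := (norm_sub_le _ _).trans (add_le_add h1 h2)
  calc ‖(‖f x - g x‖ ^ 2)‖ = ‖f x - g x‖ ^ 2 := by
        rw [Real.norm_eq_abs, abs_of_nonneg (sq_nonneg _)]
    _ ≤ (Cf + Cg) ^ 2 := pow_le_pow_left₀ (norm_nonneg _) h3 2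

lemma aux_param {E : Type*} [NormedAddCommGroup E] [InnerProductSpace ℝ E]
    {S : ℕ} (l : Fin S → ℝ) (hlsum : ∑ s, l s = 1) (a : E) (b : Fin S → E) :
    ∑ s, l s * ‖a - b s‖ ^ 2 =
      ‖a - ∑ s, l s • b s‖ ^ 2 + ∑ s, l s * ‖(∑ s', l s' • b s') - b s‖ ^ 2 := by
  set c := ∑ s, l s • b s with hc
  have hsum0 : ∑ s, l s • (c - b s) = 0 := by
    simp_rw [smul_sub]
    rw [Finset.sum_sub_distrib, ← Finset.sum_smul, hlsum, one_smul, sub_self]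
  have hexp : ∀ s, ‖a - b s‖ ^ 2 = ‖a - c‖ ^ 2 + 2 * ⟪a - c, c - b s⟫ + ‖c - b s‖ ^ 2 := by
    intro s
    have h4 : a - b s = (a - c) + (c - b s) := by abel
    rw [h4, norm_add_sq_real]
  calc ∑ s, l s * ‖a - b s‖ ^ 2
      = ∑ s, (l s * ‖a - c‖ ^ 2 + 2 * ⟪a - c, l s • (c - b s)⟫ + l s * ‖c - b s‖ ^ 2) := by
        refine Finset.sum_congr rfl fun s _ => ?_
        rw [hexp s, real_inner_smul_right]; ring
    _ = (∑ s, l s) * ‖a - c‖ ^ 2 + 2 * ⟪a - c, ∑ s, l s • (c - b s)⟫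
          + ∑ s, l s * ‖c - b s‖ ^ 2 := by
        rw [Finset.sum_add_distrib, Finset.sum_add_distrib, ← Finset.sum_mul, inner_sum,
          Finset.mul_sum]
    _ = ‖a - c‖ ^ 2 + ∑ s, l s * ‖c - b s‖ ^ 2 := by
        rw [hsum0, hlsum, inner_zero_right]; ring

lemma aux_key {d : ℕ} {ρ : Measure (EuclideanSpace ℝ (Fin d))} [IsProbabilityMeasure ρ]
    {X : Set (EuclideanSpace ℝ (Fin d))} (hXc : IsCompact X) (hX : ∀ᵐ x ∂ρ, x ∈ X)
    {MY : ℝ} {A B : EuclideanSpace ℝ (Fin d) → EuclideanSpace ℝ (Fin d)}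
    (hA : AEMeasurable A ρ) (hB : AEMeasurable B ρ)
    (hAb : ∀ᵐ x ∂ρ, ‖A x‖ ≤ MY) (hBb : ∀ᵐ x ∂ρ, ‖B x‖ ≤ MY)
    (hmap : Measure.map A ρ = Measure.map B ρ)
    {ψ : EuclideanSpace ℝ (Fin d) → ℝ} (hψ : ConvexOn ℝ Set.univ ψ)
    (hgrad : ∀ᵐ x ∂ρ, HasGradientAt ψ (A x) x) :
    0 ≤ (∫ x, ⟪x, A x⟫ ∂ρ) - ∫ x, ⟪x, B x⟫ ∂ρ ∧
      ((∫ x, ⟪x, A x⟫ ∂ρ) - (∫ x, ⟪x, B x⟫ ∂ρ) = 0 →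
        ∀ᵐ x ∂ρ, ∀ z ∈ X, ψ x + ⟪B x, z - x⟫ ≤ ψ z) := by
  -- X nonempty
  have hXne : X.Nonempty := by
    obtain ⟨x, hx⟩ := hX.exists
    exact ⟨x, hx⟩
  -- bound on X
  obtain ⟨r, hr⟩ := hXc.isBounded.subset_closedBall 0
  set MX : ℝ := max r 0 with hMX
  have hMX0 : 0 ≤ MX := le_max_right _ _
  have hXb : ∀ z ∈ X, ‖z‖ ≤ MX := by
    intro z hz
    have := hr hz
    rw [Metric.mem_closedBall, dist_zero_right] at this
    exact this.trans (le_max_left _ _)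
  -- ψ continuous
  have hψc : Continuous ψ := by
    rw [← continuousOn_univ]
    exact hψ.continuousOn isOpen_univ
  -- the restricted conjugate
  set g : EuclideanSpace ℝ (Fin d) → ℝ :=
    fun y => sSup ((fun z => ⟪z, y⟫ - ψ z) '' X) with hgdef
  have hcont : ∀ y, Continuous fun z : EuclideanSpace ℝ (Fin d) => ⟪z, y⟫ - ψ z := by
    intro y
    exact (continuous_id.inner continuous_const).sub hψc
  have hbdd : ∀ y, BddAbove ((fun z => ⟪z, y⟫ - ψ z) '' X) := by
    intro y
    exact (hXc.image (hcont y)).bddAbove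
  have hne : ∀ y, ((fun z : EuclideanSpace ℝ (Fin d) => ⟪z, y⟫ - ψ z) '' X).Nonempty :=
    fun y => hXne.image _
  have hgle : ∀ y, ∀ z ∈ X, ⟪z, y⟫ - ψ z ≤ g y := by
    intro y z hz
    exact le_csSup (hbdd y) (Set.mem_image_of_mem _ hz)
  have hgdiff : ∀ y₁ y₂, g y₁ ≤ g y₂ + MX * ‖y₁ - y₂‖ := by
    intro y₁ y₂
    refine csSup_le (hne y₁) ?_
    rintro a ⟨z, hz, rfl⟩
    show ⟪z, y₁⟫ - ψ z ≤ g y₂ + MX * ‖y₁ - y₂‖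
    have h1 : ⟪z, y₁⟫ - ψ z = (⟪z, y₂⟫ - ψ z) + ⟪z, y₁ - y₂⟫ := by
      rw [inner_sub_right]; ring
    have h2 : ⟪z, y₁ - y₂⟫ ≤ MX * ‖y₁ - y₂‖ := by
      calc ⟪z, y₁ - y₂⟫ ≤ ‖z‖ * ‖y₁ - y₂‖ := real_inner_le_norm _ _
        _ ≤ MX * ‖y₁ - y₂‖ := by
            exact mul_le_mul_of_nonneg_right (hXb z hz) (norm_nonneg _)
    have h3 := hgle y₂ z hz
    linarith
  have hgcont : Continuous g := by
    refine (LipschitzWith.of_dist_le_mul (K := Real.toNNReal MX) (f := g) ?_).continuous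
    intro y₁ y₂
    rw [Real.dist_eq, Real.coe_toNNReal _ hMX0, dist_eq_norm]
    rw [abs_sub_le_iff]
    constructor
    · have := hgdiff y₁ y₂; linarith
    · have := hgdiff y₂ y₁; rw [norm_sub_rev] at this; linarith
  -- bound on g over the ball of radius MY
  have hgb : ∀ y : EuclideanSpace ℝ (Fin d), ‖y‖ ≤ MY → ‖g y‖ ≤ ‖g 0‖ + MX * MY := by
    intro y hy
    have h1 := hgdiff y 0
    have h2 := hgdiff 0 y
    rw [sub_zero] at h1
    rw [zero_sub, norm_neg] at h2
    have h3 : MX * ‖y‖ ≤ MX * MY := mul_le_mul_of_nonneg_left hy hMX0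
    rw [Real.norm_eq_abs, abs_le]
    constructor
    · have := neg_abs_le (g 0); rw [← Real.norm_eq_abs] at this; linarith
    · have := le_abs_self (g 0); rw [← Real.norm_eq_abs] at this; linarith
  -- equality case along A
  have hgA : ∀ᵐ x ∂ρ, g (A x) = ⟪x, A x⟫ - ψ x := by
    filter_upwards [hgrad, hX] with x hg hx
    refine le_antisymm ?_ ?_
    · refine csSup_le (hne _) ?_
      rintro a ⟨z, hz, rfl⟩
      show ⟪z, A x⟫ - ψ z ≤ ⟪x, A x⟫ - ψ x
      have := aux_subgrad hψ hg z
      rw [inner_sub_right] at this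
      have h5 : ⟪A x, z⟫ = ⟪z, A x⟫ := real_inner_comm _ _
      have h6 : ⟪A x, x⟫ = ⟪x, A x⟫ := real_inner_comm _ _
      linarith
    · exact hgle (A x) x hx
  -- nonnegativity along B
  have hpos : ∀ᵐ x ∂ρ, 0 ≤ ψ x + g (B x) - ⟪x, B x⟫ := by
    filter_upwards [hX] with x hx
    have := hgle (B x) x hx
    linarith
  -- integrability
  obtain ⟨Cψ, hCψ⟩ := hXc.exists_bound_of_continuousOn hψc.continuousOn
  have I1 : Integrable ψ ρ := by
    refine ⟨hψc.aestronglyMeasurable, HasFiniteIntegral.of_bounded (C := Cψ) ?_⟩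
    filter_upwards [hX] with x hx using hCψ x hx
  have IgB : Integrable (fun x => g (B x)) ρ := by
    refine ⟨(hgcont.measurable.comp_aemeasurable hB).aestronglyMeasurable,
      HasFiniteIntegral.of_bounded (C := ‖g 0‖ + MX * MY) ?_⟩
    filter_upwards [hBb] with x hx using hgb _ hx
  have IgA : Integrable (fun x => g (A x)) ρ := by
    refine ⟨(hgcont.measurable.comp_aemeasurable hA).aestronglyMeasurable,
      HasFiniteIntegral.of_bounded (C := ‖g 0‖ + MX * MY) ?_⟩
    filter_upwards [hAb] with x hx using hgb _ hx
  have hinn : ∀ (f : EuclideanSpace ℝ (Fin d) → EuclideanSpace ℝ (Fin d)),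
      AEMeasurable f ρ → (∀ᵐ x ∂ρ, ‖f x‖ ≤ MY) → Integrable (fun x => ⟪x, f x⟫) ρ := by
    intro f hf hfb
    refine ⟨(aemeasurable_id.inner hf).aestronglyMeasurable,
      HasFiniteIntegral.of_bounded (C := MX * MY) ?_⟩
    filter_upwards [hX, hfb] with x hx hfx
    calc ‖⟪x, f x⟫‖ ≤ ‖x‖ * ‖f x‖ := norm_inner_le_norm _ _
      _ ≤ MX * MY := by
          refine mul_le_mul (hXb x hx) hfx (norm_nonneg _) hMX0
  have IiB : Integrable (fun x => ⟪x, B x⟫) ρ := hinn B hB hBb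
  have IiA : Integrable (fun x => ⟪x, A x⟫) ρ := hinn A hA hAb
  -- transfer of g-integrals
  have hgg : (∫ x, g (A x) ∂ρ) = ∫ x, g (B x) ∂ρ := by
    rw [← integral_map hA hgcont.aestronglyMeasurable, hmap,
      integral_map hB hgcont.aestronglyMeasurable]
  -- zero integral along A
  have hzero : (∫ x, (ψ x + g (A x) - ⟪x, A x⟫) ∂ρ) = 0 := by
    rw [integral_congr_ae (g := fun _ => (0:ℝ)) ?_, integral_zero]
    filter_upwards [hgA] with x hx
    rw [hx]; ring
  have IA1 : Integrable (fun x => ψ x + g (A x)) ρ := I1.add IgA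
  have IB1 : Integrable (fun x => ψ x + g (B x)) ρ := I1.add IgB
  have hvA : (∫ x, (ψ x + g (A x) - ⟪x, A x⟫) ∂ρ)
      = (∫ x, ψ x ∂ρ) + (∫ x, g (A x) ∂ρ) - ∫ x, ⟪x, A x⟫ ∂ρ := by
    rw [integral_sub IA1 IiA, integral_add I1 IgA]
  have hvB : (∫ x, (ψ x + g (B x) - ⟪x, B x⟫) ∂ρ)
      = (∫ x, ψ x ∂ρ) + (∫ x, g (B x) ∂ρ) - ∫ x, ⟪x, B x⟫ ∂ρ := by
    rw [integral_sub IB1 IiB, integral_add I1 IgB]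
  have hmain : (∫ x, (ψ x + g (B x) - ⟪x, B x⟫) ∂ρ)
      = (∫ x, ⟪x, A x⟫ ∂ρ) - ∫ x, ⟪x, B x⟫ ∂ρ := by
    rw [hvB, ← hgg]
    rw [hvA] at hzero
    linarith
  constructor
  · rw [← hmain]
    exact integral_nonneg_of_ae hpos
  · intro h0
    have hzB : (fun x => ψ x + g (B x) - ⟪x, B x⟫) =ᵐ[ρ] 0 := by
      rw [← integral_eq_zero_iff_of_nonneg_ae hpos (IB1.sub IiB)]
      rw [hmain]; exact h0
    filter_upwards [hzB, hX] with x hx0 hx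
    intro z hz
    have h7 := hgle (B x) z hz
    have h8 : ψ x + g (B x) - ⟪x, B x⟫ = 0 := hx0
    rw [inner_sub_right]
    have h9 : ⟪B x, z⟫ = ⟪z, B x⟫ := real_inner_comm _ _
    have h10 : ⟪B x, x⟫ = ⟪x, B x⟫ := real_inner_comm _ _
    linarith
lemma aux_eq {E : Type*} [NormedAddCommGroup E] [InnerProductSpace ℝ E] [CompleteSpace E]
    {X : Set E} {ψ : E → ℝ} {a b x : E} (hx : x ∈ interior X)
    (hg : HasGradientAt ψ a x) (hsub : ∀ z ∈ X, ψ x + ⟪b, z - x⟫ ≤ ψ z) : b = a := by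
  have hv : ∀ v : E, ⟪b, v⟫ ≤ ⟪a, v⟫ := by
    intro v
    have hd := aux_line_deriv hg v
    refine aux_le_deriv hd ?_
    obtain ⟨ε, hε, hball⟩ := Metric.isOpen_iff.1 isOpen_interior x hx
    have hub : (0:ℝ) < ε / (‖v‖ + 1) := by positivity
    filter_upwards [Ioo_mem_nhdsGT_of_mem (Set.left_mem_Ico.2 hub)] with t ht
    have hz : x + t • v ∈ X := by
      refine interior_subset (hball ?_)
      rw [Metric.mem_ball, dist_eq_norm]
      have : ‖x + t • v - x‖ = t * ‖v‖ := by
        rw [add_sub_cancel_left, norm_smul, Real.norm_eq_abs, abs_of_pos ht.1]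
      rw [this]
      calc t * ‖v‖ ≤ t * (‖v‖ + 1) := by nlinarith [ht.1]
        _ < ε / (‖v‖ + 1) * (‖v‖ + 1) := by
            refine mul_lt_mul_of_pos_right ht.2 (by positivity)
        _ = ε := by field_simp
    have := hsub _ hz
    have h1 : ⟪b, x + t • v - x⟫ = ⟪b, v⟫ * t := by
      rw [add_sub_cancel_left, real_inner_smul_right]; ring
    have h2 : (fun t : ℝ => ψ (x + t • v)) 0 = ψ x := by simp
    simp only [h2]
    linarith [this, h1.symm.le]
  have h0 : ⟪b - a, b - a⟫ ≤ 0 := by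
    have h1 := hv (b - a)
    rw [inner_sub_left]
    linarith
  have := real_inner_self_nonpos.1 h0
  exact sub_eq_zero.1 this

lemma aux_conv_sum {E : Type*} [NormedAddCommGroup E] [InnerProductSpace ℝ E]
    {S : ℕ} (l : Fin S → ℝ) (hl : ∀ s, 0 ≤ l s) (φ : Fin S → E → ℝ)
    (hφ : ∀ s, ConvexOn ℝ Set.univ (φ s)) :
    ConvexOn ℝ Set.univ (fun x => ∑ s, l s * φ s x) := by
  classical
  have H : ∀ t : Finset (Fin S), ConvexOn ℝ Set.univ (fun x => ∑ s ∈ t, l s * φ s x) := by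
    intro t
    induction t using Finset.induction with
    | empty => simpa using convexOn_const (0:ℝ) convex_univ
    | @insert a t ha ih =>
        have h1 : ConvexOn ℝ Set.univ (fun x => l a * φ a x) := by
          simpa [smul_eq_mul] using (hφ a).smul (hl a)
        simp only [Finset.sum_insert ha]
        exact h1.add ih
  exact H Finset.univ

lemma aux_grad_sum {E : Type*} [NormedAddCommGroup E] [InnerProductSpace ℝ E] [CompleteSpace E]
    {S : ℕ} (l : Fin S → ℝ) (φ : Fin S → E → ℝ) (g : Fin S → E) (x : E)
    (h : ∀ s, HasGradientAt (φ s) (g s) x) :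
    HasGradientAt (fun x => ∑ s, l s * φ s x) (∑ s, l s • g s) x := by
  rw [hasGradientAt_iff_hasFDerivAt]
  have h1 : ∀ s : Fin S, HasFDerivAt (fun x => l s * φ s x)
      (l s • (InnerProductSpace.toDual ℝ E (g s) : E →L[ℝ] ℝ)) x :=
    fun s => ((h s).hasFDerivAt).const_mul (l s)
  have h2 := HasFDerivAt.fun_sum (fun s (_ : s ∈ Finset.univ) => h1 s)
  have h3 : (InnerProductSpace.toDual ℝ E (∑ s, l s • g s) : E →L[ℝ] ℝ)
      = ∑ s, l s • (InnerProductSpace.toDual ℝ E (g s) : E →L[ℝ] ℝ) := by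
    ext w
    simp [inner_sum, real_inner_smul_left, Finset.sum_apply']
  rw [h3]
  exact h2

/-- Barycenters in the Monge embedding: if `T̄ = Σ_s λ_s T_{μ_s}` and `μ̄ = T̄_#ρ`, then `T̄` is
the Monge map from `ρ` to `μ̄` (it is the gradient of the convex function `Σ_s λ_s φ_s`, and any
Monge map from `ρ` to `μ̄` agrees with it `ρ`-a.e.), and `μ̄` minimizes
`ν ↦ Σ_s λ_s ‖T_ν − T_{μ_s}‖²_{L²(ρ)}` over Borel probability measures `ν`. -/
theorem monge_barycenter
    (d S : ℕ) (X Y : Set (EuclideanSpace ℝ (Fin d)))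
    (hXc : IsCompact X) (hXconv : Convex ℝ X)
    (hYc : IsCompact Y) (hYconv : Convex ℝ Y)
    (ρ : Measure (EuclideanSpace ℝ (Fin d))) [IsProbabilityMeasure ρ]
    (hρac : ρ ≪ volume) (hρX : ρ Xᶜ = 0)
    (hρsupp : ∀ U : Set (EuclideanSpace ℝ (Fin d)), IsOpen U → (U ∩ X).Nonempty → 0 < ρ U)
    (μs : Fin S → Measure (EuclideanSpace ℝ (Fin d)))
    [∀ s, IsProbabilityMeasure (μs s)] (hμY : ∀ s, μs s Yᶜ = 0)
    (l : Fin S → ℝ) (hl : ∀ s, 0 ≤ l s) (hlsum : ∑ s, l s = 1)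
    (T : Fin S → EuclideanSpace ℝ (Fin d) → EuclideanSpace ℝ (Fin d))
    (φ : Fin S → EuclideanSpace ℝ (Fin d) → ℝ)
    (hφconv : ∀ s, ConvexOn ℝ Set.univ (φ s))
    (hφgrad : ∀ s, ∀ᵐ x ∂ρ, HasGradientAt (φ s) (T s x) x)
    (hpush : ∀ s, Measure.map (T s) ρ = μs s) :
    (ConvexOn ℝ Set.univ (fun x => ∑ s, l s * φ s x) ∧
      (∀ᵐ x ∂ρ, HasGradientAt (fun x => ∑ s, l s * φ s x) (∑ s, l s • T s x) x)) ∧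
    (∀ (T' : EuclideanSpace ℝ (Fin d) → EuclideanSpace ℝ (Fin d))
        (φ' : EuclideanSpace ℝ (Fin d) → ℝ),
      ConvexOn ℝ Set.univ φ' → (∀ᵐ x ∂ρ, HasGradientAt φ' (T' x) x) →
      Measure.map T' ρ = Measure.map (fun x => ∑ s, l s • T s x) ρ →
      T' =ᵐ[ρ] fun x => ∑ s, l s • T s x) ∧
    (∀ (ν : Measure (EuclideanSpace ℝ (Fin d))) [IsProbabilityMeasure ν],
      (∃ R : ℝ, ν (Metric.closedBall 0 R)ᶜ = 0) →
      ∀ (Tν : EuclideanSpace ℝ (Fin d) → EuclideanSpace ℝ (Fin d))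
        (φν : EuclideanSpace ℝ (Fin d) → ℝ),
        ConvexOn ℝ Set.univ φν → (∀ᵐ x ∂ρ, HasGradientAt φν (Tν x) x) →
        Measure.map Tν ρ = ν →
        ∑ s, l s * ∫ x, ‖(∑ s', l s' • T s' x) - T s x‖ ^ 2 ∂ρ ≤
          ∑ s, l s * ∫ x, ‖Tν x - T s x‖ ^ 2 ∂ρ) := by
  -- Preliminaries
  have hTmeas : ∀ s, AEMeasurable (T s) ρ := fun s => aux_aemeasurable (hpush s)
  have hYmeas : MeasurableSet Y := hYc.isClosed.measurableSet
  have hTY : ∀ s, ∀ᵐ x ∂ρ, T s x ∈ Y :=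
    fun s => aux_ae_mem (hTmeas s) (hpush s) hYmeas (hμY s)
  obtain ⟨rY, hrY⟩ := hYc.isBounded.subset_closedBall 0
  set MY : ℝ := max rY 0 with hMYdef
  have hMY0 : 0 ≤ MY := le_max_right _ _
  have hYb : ∀ y ∈ Y, ‖y‖ ≤ MY := by
    intro y hy
    have := hrY hy
    rw [Metric.mem_closedBall, dist_zero_right] at this
    exact this.trans (le_max_left _ _)
  have hTb : ∀ s, ∀ᵐ x ∂ρ, ‖T s x‖ ≤ MY := by
    intro s; filter_upwards [hTY s] with x hx using hYb _ hx
  set Tbar : EuclideanSpace ℝ (Fin d) → EuclideanSpace ℝ (Fin d) :=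
    fun x => ∑ s, l s • T s x with hTbardef
  have hTbarmeas : AEMeasurable Tbar ρ :=
    Finset.aemeasurable_fun_sum _ (fun s _ => (hTmeas s).const_smul (l s))
  have hTbarb : ∀ᵐ x ∂ρ, ‖Tbar x‖ ≤ MY := by
    filter_upwards [MeasureTheory.ae_all_iff.2 hTb] with x hx
    calc ‖∑ s, l s • T s x‖ ≤ ∑ s, ‖l s • T s x‖ := norm_sum_le _ _
      _ ≤ ∑ s, l s * MY := by
          refine Finset.sum_le_sum fun s _ => ?_
          rw [norm_smul, Real.norm_eq_abs, abs_of_nonneg (hl s)]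
          exact mul_le_mul_of_nonneg_left (hx s) (hl s)
      _ = MY := by rw [← Finset.sum_mul, hlsum, one_mul]
  have hXae : ∀ᵐ x ∂ρ, x ∈ X := by
    rw [MeasureTheory.ae_iff]
    exact hρX
  have hbarconv : ConvexOn ℝ Set.univ (fun x => ∑ s, l s * φ s x) :=
    aux_conv_sum l hl φ hφconv
  have hbargrad : ∀ᵐ x ∂ρ, HasGradientAt (fun x => ∑ s, l s * φ s x) (Tbar x) x := by
    filter_upwards [MeasureTheory.ae_all_iff.2 hφgrad] with x hx
    exact aux_grad_sum l φ (fun s => T s x) x hx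
  refine ⟨⟨hbarconv, hbargrad⟩, ?_, ?_⟩
  · -- uniqueness part
    intro T' φ' hφ'conv hφ'grad hmap'
    have hprob : IsProbabilityMeasure (Measure.map Tbar ρ) :=
      Measure.isProbabilityMeasure_map hTbarmeas
    have hT'meas : AEMeasurable T' ρ := aux_aemeasurable hmap'
    have hball : MeasurableSet (Metric.closedBall (0 : EuclideanSpace ℝ (Fin d)) MY) :=
      measurableSet_closedBall
    have h1 : (Measure.map Tbar ρ) (Metric.closedBall 0 MY)ᶜ = 0 := by
      rw [Measure.map_apply_of_aemeasurable hTbarmeas hball.compl]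
      have h2 : ∀ᵐ x ∂ρ, Tbar x ∈ Metric.closedBall (0 : EuclideanSpace ℝ (Fin d)) MY := by
        filter_upwards [hTbarb] with x hx
        rwa [Metric.mem_closedBall, dist_zero_right]
      exact MeasureTheory.ae_iff.1 h2
    have hT'mem := aux_ae_mem hT'meas hmap' hball h1
    have hT'b : ∀ᵐ x ∂ρ, ‖T' x‖ ≤ MY := by
      filter_upwards [hT'mem] with x hx
      rwa [Metric.mem_closedBall, dist_zero_right] at hx
    have K1 := aux_key hXc hXae hTbarmeas hT'meas hTbarb hT'b hmap'.symm hbarconv hbargrad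
    have K2 := aux_key hXc hXae hT'meas hTbarmeas hT'b hTbarb hmap' hφ'conv hφ'grad
    have d0 : (∫ x, ⟪x, Tbar x⟫ ∂ρ) - (∫ x, ⟪x, T' x⟫ ∂ρ) = 0 := by
      have := K1.1; have := K2.1; linarith
    have hsubae := K1.2 d0
    have hfr : ρ (frontier X) = 0 := hρac (hXconv.addHaar_frontier volume)
    have hfrae : ∀ᵐ x ∂ρ, x ∉ frontier X := by
      rw [MeasureTheory.ae_iff]
      simpa [not_not] using hfr
    have hintae : ∀ᵐ x ∂ρ, x ∈ interior X := by
      filter_upwards [hXae, hfrae] with x hx hxf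
      by_contra hc
      exact hxf ⟨subset_closure hx, hc⟩
    filter_upwards [hsubae, hintae, hbargrad] with x h1 h2 h3
    exact aux_eq h2 h3 h1
  · -- minimality part
    intro ν _ hRν Tν φν hνconv hνgrad hνmap
    obtain ⟨R, hR⟩ := hRν
    have hTνmeas : AEMeasurable Tν ρ := by
      subst hνmap; exact aux_aemeasurable rfl
    have hTνb : ∀ᵐ x ∂ρ, ‖Tν x‖ ≤ max R 0 := by
      have := aux_ae_mem hTνmeas hνmap measurableSet_closedBall hR
      filter_upwards [this] with x hx
      rw [Metric.mem_closedBall, dist_zero_right] at hx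
      exact hx.trans (le_max_left _ _)
    set MT : ℝ := max R 0 with hMTdef
    have Ints : ∀ s : Fin S, Integrable (fun x => ‖Tν x - T s x‖ ^ 2) ρ :=
      fun s => aux_int_sq hTνmeas (hTmeas s) hTνb (hTb s)
    have Intb : ∀ s : Fin S, Integrable (fun x => ‖Tbar x - T s x‖ ^ 2) ρ :=
      fun s => aux_int_sq hTbarmeas (hTmeas s) hTbarb (hTb s)
    have Intv : Integrable (fun x => ‖Tν x - Tbar x‖ ^ 2) ρ :=
      aux_int_sq hTνmeas hTbarmeas hTνb hTbarb
    have e1 : ∀ f : EuclideanSpace ℝ (Fin d) → EuclideanSpace ℝ (Fin d),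
        (∀ s : Fin S, Integrable (fun x => ‖f x - T s x‖ ^ 2) ρ) →
        ∑ s, l s * ∫ x, ‖f x - T s x‖ ^ 2 ∂ρ
          = ∫ x, ∑ s, l s * ‖f x - T s x‖ ^ 2 ∂ρ := by
      intro f hint
      rw [integral_finset_sum _ (fun s _ => (hint s).const_mul (l s))]
      refine Finset.sum_congr rfl fun s _ => ?_
      rw [integral_const_mul]
    have hid : ∀ x, ∑ s, l s * ‖Tν x - T s x‖ ^ 2
        = ‖Tν x - Tbar x‖ ^ 2 + ∑ s, l s * ‖Tbar x - T s x‖ ^ 2 :=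
      fun x => aux_param l hlsum (Tν x) (fun s => T s x)
    show ∑ s, l s * ∫ x, ‖Tbar x - T s x‖ ^ 2 ∂ρ ≤ ∑ s, l s * ∫ x, ‖Tν x - T s x‖ ^ 2 ∂ρ
    rw [e1 Tbar Intb, e1 Tν Ints]
    have e2 : (∫ x, ∑ s, l s * ‖Tν x - T s x‖ ^ 2 ∂ρ)
        = (∫ x, ‖Tν x - Tbar x‖ ^ 2 ∂ρ) + ∫ x, ∑ s, l s * ‖Tbar x - T s x‖ ^ 2 ∂ρ := by
      rw [← integral_add Intv (integrable_finset_sum _ (fun s _ => (Intb s).const_mul (l s)))]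
      exact integral_congr_ae (Filter.Eventually.of_forall fun x => hid x)
    rw [e2]
    have : 0 ≤ ∫ x, ‖Tν x - Tbar x‖ ^ 2 ∂ρ :=
      integral_nonneg fun x => sq_nonneg _
    linarith
end
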